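/- Characterization of Σ₊: a power series N belongs to Σ₊ if and only if N = exp(F) for some F ∈ Σ₀. Equivalently, Σ₊ = { e^F : F ∈ Σ₀ }. -/

import Mathlib

open PowerSeries Finset Topology Filter

/-- Σ₀: zero constant term, positive linear coefficient, nonnegative higher coefficients. -/
def Sigma0 : Set (PowerSeries ℝ) :=
  {F | PowerSeries.coeff 0 F = 0 ∧ 0 < PowerSeries.coeff 1 F ∧
    ∀ n, 2 ≤ n → 0 ≤ PowerSeries.coeff n F}

/-- Σ: constant term 1 and all higher coefficients strictly positive. -/
def SigmaSet : Set (PowerSeries ℝ) :=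
  {N | PowerSeries.coeff 0 N = 1 ∧ ∀ n, 1 ≤ n → 0 < PowerSeries.coeff n N}

/-- Formal exponential of a power series (valid when F has zero constant term). -/
noncomputable def expPS (F : PowerSeries ℝ) : PowerSeries ℝ :=
  PowerSeries.mk fun n =>
    ∑ k ∈ Finset.range (n + 1), PowerSeries.coeff n (F ^ k) / (Nat.factorial k)

/-- G_{N,η}(t) = N(t)/N(ηt). -/
noncomputable def Gfun (N : PowerSeries ℝ) (η : ℝ) : PowerSeries ℝ :=
  N * (PowerSeries.rescale η N)⁻¹

/-- Σ₊ = { N ∈ Σ : ∀ η ∈ [0,1), G_{N,η} ∈ Σ }. -/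
noncomputable def SigmaPlus : Set (PowerSeries ℝ) :=
  {N | N ∈ SigmaSet ∧ ∀ η ∈ Set.Ico (0 : ℝ) 1, Gfun N η ∈ SigmaSet}


lemma coeff_pow_zero_of_lt {A : PowerSeries ℝ} (h : PowerSeries.coeff 0 A = 0)
    {m k : ℕ} (hmk : m < k) : PowerSeries.coeff m (A ^ k) = 0 := by
  have hX : (X : PowerSeries ℝ) ∣ A := X_dvd_iff.mpr (by rwa [← coeff_zero_eq_constantCoeff_apply])
  exact X_pow_dvd_iff.mp (pow_dvd_pow_of_dvd hX k) m hmk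

lemma coeff_pow_agree {A B : PowerSeries ℝ} {n : ℕ}
    (h : ∀ m ≤ n, PowerSeries.coeff m A = PowerSeries.coeff m B) :
    ∀ k, ∀ m ≤ n, PowerSeries.coeff m (A ^ k) = PowerSeries.coeff m (B ^ k) := by
  intro k
  induction k with
  | zero => intro m _; simp
  | succ k ih =>
    intro m hm
    rw [pow_succ, pow_succ, PowerSeries.coeff_mul, PowerSeries.coeff_mul]
    refine Finset.sum_congr rfl fun p hp => ?_
    rw [Finset.HasAntidiagonal.mem_antidiagonal] at hp
    rw [ih p.1 (by omega), h p.2 (by omega)]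

lemma coeff_succ_pow_agree {A B : PowerSeries ℝ} {n : ℕ}
    (hA : PowerSeries.coeff 0 A = 0) (hB : PowerSeries.coeff 0 B = 0)
    (h : ∀ m ≤ n, PowerSeries.coeff m A = PowerSeries.coeff m B) :
    ∀ k, 2 ≤ k → PowerSeries.coeff (n+1) (A ^ k) = PowerSeries.coeff (n+1) (B ^ k) := by
  intro k hk
  obtain ⟨j, rfl⟩ : ∃ j, k = j + 1 := ⟨k - 1, by omega⟩
  rw [pow_succ, pow_succ, PowerSeries.coeff_mul, PowerSeries.coeff_mul]
  refine Finset.sum_congr rfl fun p hp => ?_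
  rw [Finset.HasAntidiagonal.mem_antidiagonal] at hp
  have hAj : PowerSeries.coeff 0 (A ^ j) = 0 := by
    have hj : 1 ≤ j := by omega
    rw [coeff_zero_eq_constantCoeff_apply, map_pow, ← coeff_zero_eq_constantCoeff_apply, hA,
      zero_pow (by omega)]
  have hBj : PowerSeries.coeff 0 (B ^ j) = 0 := by
    have hj : 1 ≤ j := by omega
    rw [coeff_zero_eq_constantCoeff_apply, map_pow, ← coeff_zero_eq_constantCoeff_apply, hB,
      zero_pow (by omega)]
  rcases Nat.eq_zero_or_pos p.2 with h2 | h2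
  · rw [h2, hA, hB, mul_zero, mul_zero]
  rcases Nat.eq_zero_or_pos p.1 with h1 | h1
  · rw [h1, hAj, hBj, zero_mul, zero_mul]
  · rw [coeff_pow_agree h j p.1 (by omega), h p.2 (by omega)]

noncomputable def logCoeff (N : PowerSeries ℝ) : ℕ → ℝ
  | 0 => 0
  | n + 1 =>
    PowerSeries.coeff (n+1) N -
      ∑ k ∈ Finset.range (n+2), if k ≤ 1 then 0 else
        PowerSeries.coeff (n+1)
          ((PowerSeries.mk fun m => if h : m ≤ n then logCoeff N m else 0) ^ k) / k.factorial
  decreasing_by exact Nat.lt_succ_of_le h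

lemma coeff_expPS (F : PowerSeries ℝ) (n : ℕ) :
    PowerSeries.coeff n (expPS F) =
      ∑ k ∈ Finset.range (n + 1), PowerSeries.coeff n (F ^ k) / (Nat.factorial k) :=
  PowerSeries.coeff_mk n _

lemma coeff_zero_expPS (F : PowerSeries ℝ) : PowerSeries.coeff 0 (expPS F) = 1 := by
  rw [coeff_expPS]
  simp

lemma sum_split_le_one (n : ℕ) (g : ℕ → ℝ) :
    ∑ k ∈ Finset.range (n+2), g k
      = g 0 + g 1 + ∑ k ∈ Finset.range (n+2), (if k ≤ 1 then 0 else g k) := by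
  have h1 : ∑ k ∈ Finset.range (n+2), g k
      = ∑ k ∈ Finset.range (n+2), ((if k ≤ 1 then g k else 0) + (if k ≤ 1 then 0 else g k)) := by
    refine Finset.sum_congr rfl fun k _ => ?_
    split <;> ring
  rw [h1, Finset.sum_add_distrib]
  congr 1
  rw [← Finset.sum_filter]
  have h2 : (Finset.range (n+2)).filter (fun k => k ≤ 1) = {0, 1} := by
    ext k
    simp only [Finset.mem_filter, Finset.mem_range, Finset.mem_insert, Finset.mem_singleton]
    omega
  rw [h2, Finset.sum_pair (by omega)]

lemma expPS_logCoeff (N : PowerSeries ℝ) (hN : PowerSeries.coeff 0 N = 1) :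
    expPS (PowerSeries.mk (logCoeff N)) = N := by
  ext n
  match n with
  | 0 => rw [coeff_zero_expPS, hN]
  | n + 1 =>
    set F := PowerSeries.mk (logCoeff N) with hF
    set Ft := (PowerSeries.mk fun m => if h : m ≤ n then logCoeff N m else 0 : PowerSeries ℝ)
      with hFt
    have hagree : ∀ m ≤ n, PowerSeries.coeff m F = PowerSeries.coeff m Ft := by
      intro m hm
      rw [hF, hFt, PowerSeries.coeff_mk, PowerSeries.coeff_mk, dif_pos hm]
    have hF0 : PowerSeries.coeff 0 F = 0 := by
      rw [hF, PowerSeries.coeff_mk, logCoeff]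
    have hFt0 : PowerSeries.coeff 0 Ft = 0 := by
      rw [hFt, PowerSeries.coeff_mk, dif_pos (Nat.zero_le n), logCoeff]
    rw [coeff_expPS, sum_split_le_one n (fun k => PowerSeries.coeff (n+1) (F ^ k) / k.factorial)]
    have e0 : PowerSeries.coeff (n+1) (F ^ 0) / ((Nat.factorial 0 : ℕ) : ℝ) = 0 := by
      simp
    have e1 : PowerSeries.coeff (n+1) (F ^ 1) / (Nat.factorial 1) = logCoeff N (n+1) := by
      simp [hF]
    have e2 : ∑ k ∈ Finset.range (n+2),
        (if k ≤ 1 then 0 else PowerSeries.coeff (n+1) (F ^ k) / k.factorial)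
        = ∑ k ∈ Finset.range (n+2),
        (if k ≤ 1 then (0:ℝ) else PowerSeries.coeff (n+1) (Ft ^ k) / k.factorial) := by
      refine Finset.sum_congr rfl fun k _ => ?_
      split
      · rfl
      · rw [coeff_succ_pow_agree hF0 hFt0 hagree k (by omega)]
    rw [e0, e1, e2, logCoeff]
    ring

lemma sum_triangle (n : ℕ) (f : ℕ → ℕ → ℝ) (hf : ∀ i j, n < i + j → f i j = 0) :
    ∑ k ∈ Finset.range (n+1), ∑ p ∈ Finset.HasAntidiagonal.antidiagonal k, f p.1 p.2
      = ∑ i ∈ Finset.range (n+1), ∑ j ∈ Finset.range (n+1), f i j := by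
  rw [Finset.sum_sigma' (Finset.range (n+1)) (fun k => Finset.HasAntidiagonal.antidiagonal k)
    (fun k p => f p.1 p.2)]
  rw [← Finset.sum_product' (s := Finset.range (n+1)) (t := Finset.range (n+1))
    (f := fun i j => f i j)]
  rw [← Finset.sum_subset (Finset.filter_subset (fun p : ℕ × ℕ => p.1 + p.2 ≤ n) _)
    (fun p _ hp => ?_)]
  · refine Finset.sum_nbij' (fun p => (p.2.1, p.2.2)) (fun p => ⟨p.1 + p.2, p⟩) ?_ ?_ ?_ ?_ ?_
    · rintro ⟨k, p⟩ hp
      simp only [Finset.mem_sigma, Finset.mem_range, Finset.HasAntidiagonal.mem_antidiagonal] at hp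
      simp only [Finset.mem_filter, Finset.mem_product, Finset.mem_range]
      omega
    · intro p hp
      simp only [Finset.mem_filter, Finset.mem_product, Finset.mem_range] at hp
      simp only [Finset.mem_sigma, Finset.mem_range, Finset.HasAntidiagonal.mem_antidiagonal]
      exact ⟨by omega, trivial⟩
    · rintro ⟨k, p⟩ hp
      simp only [Finset.mem_sigma, Finset.mem_range, Finset.HasAntidiagonal.mem_antidiagonal] at hp
      simp [hp.2]
    · intro p hp; rfl
    · intro p hp; rfl
  · simp only [Finset.mem_filter, Finset.mem_product, Finset.mem_range, not_and, not_le] at hp ⊢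
    exact hf p.1 p.2 (by omega)

lemma coeff_mul_pow_zero_of_lt {A B : PowerSeries ℝ}
    (hA : PowerSeries.coeff 0 A = 0) (hB : PowerSeries.coeff 0 B = 0)
    {n i j : ℕ} (h : n < i + j) : PowerSeries.coeff n (A ^ i * B ^ j) = 0 := by
  rw [PowerSeries.coeff_mul]
  refine Finset.sum_eq_zero fun p hp => ?_
  rw [Finset.HasAntidiagonal.mem_antidiagonal] at hp
  rcases lt_or_ge p.1 i with h1 | h1
  · rw [coeff_pow_zero_of_lt hA h1, zero_mul]
  · rw [coeff_pow_zero_of_lt hB (by omega), mul_zero]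

lemma expPS_add {A B : PowerSeries ℝ}
    (hA : PowerSeries.coeff 0 A = 0) (hB : PowerSeries.coeff 0 B = 0) :
    expPS (A + B) = expPS A * expPS B := by
  ext n
  rw [PowerSeries.coeff_mul, coeff_expPS]
  -- RHS
  have hR : ∀ p ∈ Finset.HasAntidiagonal.antidiagonal n,
      PowerSeries.coeff p.1 (expPS A) * PowerSeries.coeff p.2 (expPS B)
        = ∑ i ∈ Finset.range (n+1), ∑ j ∈ Finset.range (n+1),
            PowerSeries.coeff p.1 (A ^ i) * PowerSeries.coeff p.2 (B ^ j)
              / (i.factorial * j.factorial) := by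
    intro p hp
    rw [Finset.HasAntidiagonal.mem_antidiagonal] at hp
    rw [coeff_expPS, coeff_expPS]
    have eA : ∑ i ∈ Finset.range (p.1 + 1), PowerSeries.coeff p.1 (A ^ i) / i.factorial
        = ∑ i ∈ Finset.range (n+1), PowerSeries.coeff p.1 (A ^ i) / i.factorial := by
      refine Finset.sum_subset (Finset.range_subset_range.mpr (by omega)) fun i _ hi => ?_
      rw [Finset.mem_range, not_lt] at hi
      rw [coeff_pow_zero_of_lt hA (by omega), zero_div]
    have eB : ∑ j ∈ Finset.range (p.2 + 1), PowerSeries.coeff p.2 (B ^ j) / j.factorial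
        = ∑ j ∈ Finset.range (n+1), PowerSeries.coeff p.2 (B ^ j) / j.factorial := by
      refine Finset.sum_subset (Finset.range_subset_range.mpr (by omega)) fun j _ hj => ?_
      rw [Finset.mem_range, not_lt] at hj
      rw [coeff_pow_zero_of_lt hB (by omega), zero_div]
    rw [eA, eB, Finset.sum_mul_sum]
    refine Finset.sum_congr rfl fun i _ => Finset.sum_congr rfl fun j _ => ?_
    field_simp
  rw [Finset.sum_congr rfl hR, Finset.sum_comm]
  -- now RHS = ∑ i ∑ p ∑ j ; push coeff_mul
  have hR2 : ∑ i ∈ Finset.range (n+1), ∑ p ∈ Finset.HasAntidiagonal.antidiagonal n,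
      ∑ j ∈ Finset.range (n+1),
        PowerSeries.coeff p.1 (A ^ i) * PowerSeries.coeff p.2 (B ^ j)
          / (i.factorial * j.factorial)
      = ∑ i ∈ Finset.range (n+1), ∑ j ∈ Finset.range (n+1),
          PowerSeries.coeff n (A ^ i * B ^ j) / (i.factorial * j.factorial) := by
    refine Finset.sum_congr rfl fun i _ => ?_
    rw [Finset.sum_comm]
    refine Finset.sum_congr rfl fun j _ => ?_
    rw [PowerSeries.coeff_mul, Finset.sum_div]
  rw [hR2]
  -- LHS
  have hL : ∀ k ∈ Finset.range (n+1),
      PowerSeries.coeff n ((A + B) ^ k) / k.factorial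
        = ∑ p ∈ Finset.HasAntidiagonal.antidiagonal k,
            PowerSeries.coeff n (A ^ p.1 * B ^ p.2) / (p.1.factorial * p.2.factorial) := by
    intro k _
    rw [add_pow, map_sum, Finset.sum_div,
      Finset.Nat.sum_antidiagonal_eq_sum_range_succ_mk
        (fun p => PowerSeries.coeff n (A ^ p.1 * B ^ p.2) / (p.1.factorial * p.2.factorial)) k]
    refine Finset.sum_congr rfl fun i hi => ?_
    rw [Finset.mem_range] at hi
    show _ = PowerSeries.coeff n (A ^ i * B ^ (k - i))
      / ((i.factorial : ℝ) * ((k - i).factorial : ℝ))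
    have hfac : (k.choose i : ℝ) / k.factorial = 1 / (i.factorial * (k - i).factorial) := by
      have hn : k.choose i * (i.factorial * (k - i).factorial) = k.factorial := by
        rw [← mul_assoc]
        exact Nat.choose_mul_factorial_mul_factorial (by omega)
      rw [div_eq_div_iff (by positivity) (by positivity), one_mul]
      exact_mod_cast congrArg (Nat.cast : ℕ → ℝ) hn
    rw [mul_comm (A ^ i * B ^ (k - i)) _, ← nsmul_eq_mul, map_nsmul, nsmul_eq_mul,
      mul_comm, mul_div_assoc, hfac, mul_one_div]
  rw [Finset.sum_congr rfl hL]
  exact sum_triangle n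
    (fun i j => PowerSeries.coeff n (A ^ i * B ^ j) / (i.factorial * j.factorial))
    (fun i j hij => by simp only [coeff_mul_pow_zero_of_lt hA hB hij, zero_div])

lemma rescale_expPS (F : PowerSeries ℝ) (η : ℝ) :
    PowerSeries.rescale η (expPS F) = expPS (PowerSeries.rescale η F) := by
  ext n
  rw [PowerSeries.coeff_rescale, coeff_expPS, coeff_expPS, Finset.mul_sum]
  refine Finset.sum_congr rfl fun k _ => ?_
  rw [← map_pow, PowerSeries.coeff_rescale]
  ring

lemma coeff_pow_nonneg {A : PowerSeries ℝ} (h : ∀ m, 0 ≤ PowerSeries.coeff m A) :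
    ∀ k m, 0 ≤ PowerSeries.coeff m (A ^ k) := by
  intro k
  induction k with
  | zero =>
    intro m
    rw [pow_zero, PowerSeries.coeff_one]
    split <;> norm_num
  | succ k ih =>
    intro m
    rw [pow_succ, PowerSeries.coeff_mul]
    exact Finset.sum_nonneg fun p _ => mul_nonneg (ih p.1) (h p.2)

lemma coeff_pow_self_ge {A : PowerSeries ℝ} (h : ∀ m, 0 ≤ PowerSeries.coeff m A) :
    ∀ n, (PowerSeries.coeff 1 A) ^ n ≤ PowerSeries.coeff n (A ^ n) := by
  intro n
  induction n with
  | zero => simp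
  | succ n ih =>
    rw [pow_succ, pow_succ, PowerSeries.coeff_mul]
    calc PowerSeries.coeff 1 A ^ n * PowerSeries.coeff 1 A
        ≤ PowerSeries.coeff n (A ^ n) * PowerSeries.coeff 1 A :=
          mul_le_mul_of_nonneg_right ih (h 1)
      _ ≤ ∑ p ∈ Finset.HasAntidiagonal.antidiagonal (n + 1),
            PowerSeries.coeff p.1 (A ^ n) * PowerSeries.coeff p.2 A := by
          exact Finset.single_le_sum (f := fun p : ℕ × ℕ =>
            PowerSeries.coeff p.1 (A ^ n) * PowerSeries.coeff p.2 A)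
            (fun p _ => mul_nonneg (coeff_pow_nonneg h n p.1) (h p.2))
            (show ((n:ℕ), (1:ℕ)) ∈ Finset.HasAntidiagonal.antidiagonal (n+1) by rw [Finset.HasAntidiagonal.mem_antidiagonal])

lemma coeff_expPS_pos {D : PowerSeries ℝ} (h0 : PowerSeries.coeff 0 D = 0)
    (h1 : 0 < PowerSeries.coeff 1 D) (hn : ∀ m, 0 ≤ PowerSeries.coeff m D) :
    ∀ n, 1 ≤ n → 0 < PowerSeries.coeff n (expPS D) := by
  intro n hn1
  rw [coeff_expPS]
  refine Finset.sum_pos' (fun k _ => div_nonneg (coeff_pow_nonneg hn k n) (by positivity)) ?_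
  refine ⟨n, Finset.self_mem_range_succ n, ?_⟩
  have : (0:ℝ) < (PowerSeries.coeff 1 D) ^ n := pow_pos h1 n
  have h2 := coeff_pow_self_ge hn n
  exact div_pos (lt_of_lt_of_le this h2) (by positivity)

lemma Gfun_expPS (F : PowerSeries ℝ) (η : ℝ) (h0 : PowerSeries.coeff 0 F = 0) :
    Gfun (expPS F) η = expPS (F - PowerSeries.rescale η F) := by
  have h0' : PowerSeries.coeff 0 (PowerSeries.rescale η F) = 0 := by
    rw [PowerSeries.coeff_rescale, h0, mul_zero]
  have hD : PowerSeries.coeff 0 (F - PowerSeries.rescale η F) = 0 := by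
    rw [map_sub, h0, h0', sub_zero]
  have key : expPS (F - PowerSeries.rescale η F) * PowerSeries.rescale η (expPS F) = expPS F := by
    rw [rescale_expPS, ← expPS_add hD h0', sub_add_cancel]
  have hc : PowerSeries.constantCoeff (PowerSeries.rescale η (expPS F)) ≠ 0 := by
    rw [← PowerSeries.coeff_zero_eq_constantCoeff_apply, PowerSeries.coeff_rescale,
      coeff_zero_expPS, pow_zero, one_mul]
    exact one_ne_zero
  rw [Gfun]
  nth_rewrite 1 [← key]
  rw [mul_assoc, PowerSeries.mul_inv_cancel _ hc, mul_one]

noncomputable def auxE (F : PowerSeries ℝ) (η : ℝ) : PowerSeries ℝ :=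
  PowerSeries.mk fun m => PowerSeries.coeff m F * ∑ i ∈ Finset.range m, η ^ i

lemma auxE_smul (F : PowerSeries ℝ) (η : ℝ) :
    F - PowerSeries.rescale η F = (1 - η) • auxE F η := by
  ext m
  rw [map_sub, map_smul, PowerSeries.coeff_rescale, auxE, PowerSeries.coeff_mk]
  have hg : (∑ i ∈ Finset.range m, η ^ i) * (η - 1) = η ^ m - 1 := geom_sum_mul η m
  rw [smul_eq_mul]
  linear_combination (PowerSeries.coeff m F) * hg

lemma continuous_coeff_auxE_pow (F : PowerSeries ℝ) (k m : ℕ) :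
    Continuous fun η : ℝ => PowerSeries.coeff m ((auxE F η) ^ k) := by
  induction k generalizing m with
  | zero => simpa using continuous_const
  | succ k ih =>
    have : (fun η : ℝ => PowerSeries.coeff m ((auxE F η) ^ (k+1)))
        = fun η : ℝ => ∑ p ∈ Finset.HasAntidiagonal.antidiagonal m,
            PowerSeries.coeff p.1 ((auxE F η) ^ k) * PowerSeries.coeff p.2 (auxE F η) := by
      funext η
      rw [pow_succ, PowerSeries.coeff_mul]
    rw [this]
    refine continuous_finset_sum _ fun p _ => (ih p.1).mul ?_
    have : (fun η : ℝ => PowerSeries.coeff p.2 (auxE F η))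
        = fun η : ℝ => PowerSeries.coeff p.2 F * ∑ i ∈ Finset.range p.2, η ^ i := by
      funext η; rw [auxE, PowerSeries.coeff_mk]
    rw [this]
    exact continuous_const.mul (continuous_finset_sum _ fun i _ => continuous_pow i)

lemma coeff_log_nonneg {F : PowerSeries ℝ} (h0 : PowerSeries.coeff 0 F = 0)
    (hG : ∀ η ∈ Set.Ico (0:ℝ) 1, ∀ m, 1 ≤ m →
      0 < PowerSeries.coeff m (Gfun (expPS F) η))
    {n : ℕ} (hn : 1 ≤ n) : 0 ≤ PowerSeries.coeff n F := by
  set h : ℝ → ℝ := fun η => ∑ k ∈ Finset.range (n+1),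
    (if k = 0 then 0 else (1-η)^(k-1) * PowerSeries.coeff n ((auxE F η) ^ k) / k.factorial)
    with hh
  -- (1-η) * h η = coeff n (expPS (F - rescale η F))
  have key : ∀ η : ℝ, (1-η) * h η
      = PowerSeries.coeff n (expPS (F - PowerSeries.rescale η F)) := by
    intro η
    rw [coeff_expPS, hh, Finset.mul_sum]
    refine Finset.sum_congr rfl fun k hk => ?_
    rcases Nat.eq_zero_or_pos k with rfl | hk1
    · have hn0 : n ≠ 0 := by omega
      simp [PowerSeries.coeff_one, hn0]
    · obtain ⟨j, rfl⟩ : ∃ j, k = j + 1 := ⟨k - 1, by omega⟩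
      rw [if_neg (by omega), auxE_smul, smul_pow, map_smul, smul_eq_mul, Nat.add_sub_cancel]
      ring
  have hcont : Continuous h := by
    rw [hh]
    refine continuous_finset_sum _ fun k _ => ?_
    split
    · exact continuous_const
    · exact (((continuous_const.sub continuous_id).pow _).mul
        (continuous_coeff_auxE_pow F k n)).div_const _
  have h1 : h 1 = n * PowerSeries.coeff n F := by
    simp only [hh]
    rw [Finset.sum_eq_single_of_mem 1 (Finset.mem_range.mpr (by omega))]
    · simp only [if_neg one_ne_zero, sub_self, pow_zero, one_mul, pow_one, Nat.factorial_one,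
        Nat.cast_one, div_one]
      rw [auxE, PowerSeries.coeff_mk]
      simp [mul_comm]
    · intro k _ hk1
      rcases Nat.eq_zero_or_pos k with rfl | hkp
      · simp
      · rw [if_neg (by omega), sub_self, zero_pow (by omega), zero_mul, zero_div]
  have hnonneg : ∀ η ∈ Set.Ico (0:ℝ) 1, 0 ≤ h η := by
    intro η hη
    have hpos : 0 < PowerSeries.coeff n (Gfun (expPS F) η) := hG η hη n hn
    rw [Gfun_expPS F η h0, ← key η] at hpos
    nlinarith [hη.2]
  -- limit argument
  have hne : (𝓝[<] (1:ℝ)).NeBot := by infer_instance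
  have htend : Filter.Tendsto h (nhdsWithin 1 (Set.Iio 1)) (nhds (h 1)) :=
    (hcont.tendsto 1).mono_left nhdsWithin_le_nhds
  have hev : ∀ᶠ η in nhdsWithin (1:ℝ) (Set.Iio 1), 0 ≤ h η := by
    have h1' : ∀ᶠ η in nhdsWithin (1:ℝ) (Set.Iio 1), η ∈ Set.Iio (1:ℝ) :=
      eventually_mem_nhdsWithin
    have h2' : ∀ᶠ η in nhdsWithin (1:ℝ) (Set.Iio 1), (0:ℝ) < η :=
      Filter.Eventually.filter_mono nhdsWithin_le_nhds
        (eventually_gt_nhds (by norm_num : (0:ℝ) < 1))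
    filter_upwards [h1', h2'] with η hlt hgt
    exact hnonneg η ⟨le_of_lt hgt, hlt⟩
  have : 0 ≤ h 1 := ge_of_tendsto htend hev
  rw [h1] at this
  have hn' : (0:ℝ) < n := by exact_mod_cast hn
  nlinarith

lemma coeff_one_expPS (F : PowerSeries ℝ) :
    PowerSeries.coeff 1 (expPS F) = PowerSeries.coeff 1 F := by
  rw [coeff_expPS]
  simp [Finset.sum_range_succ, PowerSeries.coeff_one]

/-- Characterization: Σ₊ = { e^F : F ∈ Σ₀ }. -/
theorem stmt10 (N : PowerSeries ℝ) :
    N ∈ SigmaPlus ↔ ∃ F ∈ Sigma0, N = expPS F := by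
  constructor
  · intro hN
    obtain ⟨⟨hN0, hNpos⟩, hG⟩ := hN
    set F := PowerSeries.mk (logCoeff N) with hF
    have hexp : expPS F = N := expPS_logCoeff N hN0
    have h0 : PowerSeries.coeff 0 F = 0 := by rw [hF, PowerSeries.coeff_mk, logCoeff]
    have h1 : PowerSeries.coeff 1 F = PowerSeries.coeff 1 N := by
      rw [← hexp, coeff_one_expPS]
    refine ⟨F, ⟨h0, ?_, ?_⟩, hexp.symm⟩
    · rw [h1]; exact hNpos 1 le_rfl
    · intro n hn2
      refine coeff_log_nonneg h0 (fun η hη m hm => ?_) (by omega)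
      rw [hexp]
      exact (hG η hη).2 m hm
  · rintro ⟨F, ⟨hF0, hF1, hFn⟩, rfl⟩
    have hall : ∀ m, 0 ≤ PowerSeries.coeff m F := by
      intro m
      match m with
      | 0 => rw [hF0]
      | 1 => exact le_of_lt hF1
      | (m+2) => exact hFn (m+2) (by omega)
    refine ⟨⟨coeff_zero_expPS F, coeff_expPS_pos hF0 hF1 hall⟩, fun η hη => ?_⟩
    rw [Gfun_expPS F η hF0]
    have hD0 : PowerSeries.coeff 0 (F - PowerSeries.rescale η F) = 0 := by
      rw [map_sub, PowerSeries.coeff_rescale, hF0]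
      ring
    have hD1 : 0 < PowerSeries.coeff 1 (F - PowerSeries.rescale η F) := by
      rw [map_sub, PowerSeries.coeff_rescale, pow_one]
      nlinarith [hη.2, hF1]
    have hDn : ∀ m, 0 ≤ PowerSeries.coeff m (F - PowerSeries.rescale η F) := by
      intro m
      rw [map_sub, PowerSeries.coeff_rescale]
      have hpow : η ^ m ≤ 1 := pow_le_one₀ hη.1 (le_of_lt hη.2)
      nlinarith [mul_nonneg (hall m) (sub_nonneg.mpr hpow)]
    exact ⟨coeff_zero_expPS _, coeff_expPS_pos hD0 hD1 hDn⟩
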